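/- Let r, ζ > 0, H > 0, θ_k ∈ ℝ, and θ_l ∈ ℝ. Define b̂ = θ_l - sin(θ_l - θ_k) and = r² + ζ² + H² - rζ(2cos(θ_l - θ_k) + sin²(θ_l - θ_k)). Then for every θ ∈ ℝ, r² + ζ² + H² - 2rζ cos(θ - θ_k) ≤ rζ(θ - b̂)² + Â, and hence P γ₀ / (rζ(θ - b̂)² + Â) ≤ P γ₀ / (r² + ζ² + H² - 2rζ cos(θ - θ_k)) for any P, γ₀ > 0. -/

import Mathlib

/-!
The cosine has second derivative `-cos ≥ -1`, so `cos x + x ^ 2 / 2` is convex and lies above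
its tangent lines. Rearranged, `cos x` dominates the concave quadratic that touches it at `y`
(the surrogate of Lemma 3). Applied at `x = θ - θ_k`, `y = θ_l - θ_k` and scaled by `2 r ζ ≥ 0`,
this is the distance bound; the SNR bound follows because the true squared distance is at least
`(r - ζ) ^ 2 + H ^ 2 > 0`.
-/

open Real Set

theorem ConvexOn.add_mul_sub_le_of_hasDerivAt {S : Set ℝ} {f : ℝ → ℝ} {f' x y : ℝ}
    (hf : ConvexOn ℝ S f) (hx : x ∈ S) (hy : y ∈ S) (hfx : HasDerivAt f f' x) :
    f x + f' * (y - x) ≤ f y := by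
  rcases lt_trichotomy x y with hxy | rfl | hyx
  · have := hf.le_slope_of_hasDerivAt hx hy hxy hfx
    rw [slope_def_field, le_div_iff₀ (sub_pos.mpr hxy)] at this
    linarith
  · simp
  · have := hf.slope_le_of_hasDerivAt hy hx hyx hfx
    rw [slope_def_field, div_le_iff₀ (sub_pos.mpr hyx)] at this
    linarith

theorem Real.hasDerivAt_cos_add_sq_div_two (x : ℝ) :
    HasDerivAt (fun x => cos x + x ^ 2 / 2) (x - sin x) x :=
  ((hasDerivAt_cos x).add ((hasDerivAt_pow 2 x).div_const 2)).congr_deriv (by ring)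

theorem Real.convexOn_cos_add_sq_div_two : ConvexOn ℝ univ fun x => cos x + x ^ 2 / 2 :=
  convexOn_of_hasDerivWithinAt2_nonneg convex_univ (by fun_prop)
    (fun x _ => (hasDerivAt_cos_add_sq_div_two x).hasDerivWithinAt)
    (fun x _ => ((hasDerivAt_id x).sub (hasDerivAt_sin x)).hasDerivWithinAt)
    (fun x _ => sub_nonneg.mpr (cos_le_one x))

theorem Real.cos_sub_sin_mul_sub_sq_div_two_le_cos (x y : ℝ) :
    cos y - sin y * (x - y) - (x - y) ^ 2 / 2 ≤ cos x := by
  have := convexOn_cos_add_sq_div_two.add_mul_sub_le_of_hasDerivAt (mem_univ y) (mem_univ x)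
    (hasDerivAt_cos_add_sq_div_two y)
  linarith

theorem circular_snr_surrogate_bound (r ζ H θk θl : ℝ)
    (hr : 0 < r) (hζ : 0 < ζ) (hH : 0 < H) :
    ∀ θ : ℝ,
      (r ^ 2 + ζ ^ 2 + H ^ 2 - 2 * r * ζ * Real.cos (θ - θk) ≤
        r * ζ * (θ - (θl - Real.sin (θl - θk))) ^ 2
          + (r ^ 2 + ζ ^ 2 + H ^ 2
              - r * ζ * (2 * Real.cos (θl - θk) + (Real.sin (θl - θk)) ^ 2))) ∧
      ∀ P γ₀ : ℝ, 0 < P → 0 < γ₀ →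
        P * γ₀ / (r * ζ * (θ - (θl - Real.sin (θl - θk))) ^ 2
            + (r ^ 2 + ζ ^ 2 + H ^ 2
                - r * ζ * (2 * Real.cos (θl - θk) + (Real.sin (θl - θk)) ^ 2))) ≤
          P * γ₀ / (r ^ 2 + ζ ^ 2 + H ^ 2 - 2 * r * ζ * Real.cos (θ - θk)) := by
  intro θ
  have hrζ : 0 ≤ 2 * r * ζ := by positivity
  have hcos := cos_sub_sin_mul_sub_sq_div_two_le_cos (θ - θk) (θl - θk)
  have hbound : r ^ 2 + ζ ^ 2 + H ^ 2 - 2 * r * ζ * cos (θ - θk) ≤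
      r * ζ * (θ - (θl - sin (θl - θk))) ^ 2
        + (r ^ 2 + ζ ^ 2 + H ^ 2 - r * ζ * (2 * cos (θl - θk) + sin (θl - θk) ^ 2)) := by
    linarith [mul_le_mul_of_nonneg_left hcos hrζ]
  refine ⟨hbound, fun P γ₀ hP hγ₀ => div_le_div_of_nonneg_left (by positivity) ?_ hbound⟩
  linarith [mul_le_mul_of_nonneg_left (cos_le_one (θ - θk)) hrζ, sq_nonneg (r - ζ), pow_pos hH 2]
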